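/- Let I ⊆ ℝ be an open interval and let g : ℝ → ℝ² be twice continuously differentiable on I with g'(ξ) ≠ 0 for all ξ ∈ I. Then for every η ∈ ℝ and ξ ∈ I, the map P(η,ξ) = g(ξ) + η n(ξ) is differentiable at (η,ξ), its partial derivatives are ∂P/∂η = n(ξ) and ∂P/∂ξ = ‖g'(ξ)‖(1 + ηκ(ξ)) τ(ξ), and the determinant of the 2×2 matrix with columns ∂P/∂η and ∂P/∂ξ equals ‖g'(ξ)‖(1 + ηκ(ξ)). -/

import Mathlib

/-!
Since `n = Rτ` with `R` a rotation by `-π/2`, the Frenet equations of the plane curve read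
`τ' = -‖g'‖ κ n` and `n' = ‖g'‖ κ τ`. Hence `∂P/∂ξ = g' + η n' = ‖g'‖ (1 + η κ) τ` and
`∂P/∂η = n`, and the determinant is `‖g'‖ (1 + η κ) det (n, τ) = ‖g'‖ (1 + η κ)` because
`(n, τ)` is an orthonormal frame.
-/

open Real Set

/-- The speed `‖g'(ξ)‖` (Euclidean norm of the derivative) of a planar curve. -/
noncomputable def speed (g : ℝ → ℝ × ℝ) (ξ : ℝ) : ℝ :=
  Real.sqrt ((deriv g ξ).1 ^ 2 + (deriv g ξ).2 ^ 2)

/-- The unit tangent vector `τ(ξ) = g'(ξ)/‖g'(ξ)‖`. -/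
noncomputable def unitTangent (g : ℝ → ℝ × ℝ) (ξ : ℝ) : ℝ × ℝ :=
  ((deriv g ξ).1 / speed g ξ, (deriv g ξ).2 / speed g ξ)

/-- The unit normal vector `n(ξ) = (τ₂(ξ), -τ₁(ξ))`. -/
noncomputable def unitNormal (g : ℝ → ℝ × ℝ) (ξ : ℝ) : ℝ × ℝ :=
  ((unitTangent g ξ).2, -(unitTangent g ξ).1)

/-- The signed curvature `κ(ξ) = (g₁'(ξ)g₂''(ξ) - g₂'(ξ)g₁''(ξ))/‖g'(ξ)‖³`. -/
noncomputable def signedCurvature (g : ℝ → ℝ × ℝ) (ξ : ℝ) : ℝ :=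
  ((deriv g ξ).1 * (deriv (deriv g) ξ).2 - (deriv g ξ).2 * (deriv (deriv g) ξ).1) /
    speed g ξ ^ 3


/-- The Frenet (tubular) map `P(η,ξ) = g(ξ) + η n(ξ)`, with argument `p = (η, ξ)`. -/
noncomputable def frenetMap (g : ℝ → ℝ × ℝ) (p : ℝ × ℝ) : ℝ × ℝ :=
  g p.2 + p.1 • unitNormal g p.2

theorem HasDerivAt.fst {𝕜 E F : Type*} [NontriviallyNormedField 𝕜] [NormedAddCommGroup E]
    [NormedSpace 𝕜 E] [NormedAddCommGroup F] [NormedSpace 𝕜 F] {f : 𝕜 → E × F} {f' : E × F}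
    {x : 𝕜} (h : HasDerivAt f f' x) : HasDerivAt (fun t => (f t).1) f'.1 x :=
  (ContinuousLinearMap.fst 𝕜 E F).hasFDerivAt.comp_hasDerivAt x h

theorem HasDerivAt.snd {𝕜 E F : Type*} [NontriviallyNormedField 𝕜] [NormedAddCommGroup E]
    [NormedSpace 𝕜 E] [NormedAddCommGroup F] [NormedSpace 𝕜 F] {f : 𝕜 → E × F} {f' : E × F}
    {x : 𝕜} (h : HasDerivAt f f' x) : HasDerivAt (fun t => (f t).2) f'.2 x :=
  (ContinuousLinearMap.snd 𝕜 E F).hasFDerivAt.comp_hasDerivAt x h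

section Curve

variable {g : ℝ → ℝ × ℝ} {ξ : ℝ}

theorem speed_sq (g : ℝ → ℝ × ℝ) (ξ : ℝ) :
    speed g ξ ^ 2 = (deriv g ξ).1 ^ 2 + (deriv g ξ).2 ^ 2 :=
  sq_sqrt (by positivity)

theorem speed_pos (hne : deriv g ξ ≠ 0) : 0 < speed g ξ := by
  refine sqrt_pos.mpr ?_
  rcases eq_or_ne (deriv g ξ).1 0 with h1 | h1
  · have h2 : (deriv g ξ).2 ≠ 0 := fun h2 => hne (Prod.ext h1 h2)
    positivity
  · positivity

theorem speed_smul_unitTangent (hs : speed g ξ ≠ 0) : speed g ξ • unitTangent g ξ = deriv g ξ := by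
  ext <;> simp [unitTangent, mul_div_cancel₀ _ hs]

theorem unitTangent_fst_sq_add_snd_sq (hs : speed g ξ ≠ 0) :
    (unitTangent g ξ).1 ^ 2 + (unitTangent g ξ).2 ^ 2 = 1 := by
  simp only [unitTangent, div_pow]
  field_simp
  exact (speed_sq g ξ).symm

theorem hasDerivAt_speed (h2 : DifferentiableAt ℝ (deriv g) ξ) (hne : deriv g ξ ≠ 0) :
    HasDerivAt (speed g)
      (((deriv g ξ).1 * (deriv (deriv g) ξ).1 + (deriv g ξ).2 * (deriv (deriv g) ξ).2)
        / speed g ξ) ξ := by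
  have hs := (speed_pos hne).ne'
  refine (((h2.hasDerivAt.fst.fun_pow 2).fun_add (h2.hasDerivAt.snd.fun_pow 2)).sqrt
    (speed_sq g ξ ▸ pow_ne_zero 2 hs)).congr_deriv ?_
  change _ / (2 * speed g ξ) = _
  field_simp
  push_cast
  ring

theorem hasDerivAt_unitTangent (h2 : DifferentiableAt ℝ (deriv g) ξ) (hne : deriv g ξ ≠ 0) :
    HasDerivAt (unitTangent g) (-(speed g ξ * signedCurvature g ξ) • unitNormal g ξ) ξ := by
  have hs := (speed_pos hne).ne'
  have hS := hasDerivAt_speed h2 hne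
  refine ((h2.hasDerivAt.fst.fun_div hS hs).prodMk (h2.hasDerivAt.snd.fun_div hS hs)).congr_deriv ?_
  ext <;> simp only [signedCurvature, unitNormal, unitTangent, Prod.smul_fst, Prod.smul_snd,
    smul_eq_mul] <;> field_simp
  · linear_combination (deriv (deriv g) ξ).1 * speed_sq g ξ
  · linear_combination (deriv (deriv g) ξ).2 * speed_sq g ξ

theorem hasDerivAt_unitNormal (h2 : DifferentiableAt ℝ (deriv g) ξ) (hne : deriv g ξ ≠ 0) :
    HasDerivAt (unitNormal g) ((speed g ξ * signedCurvature g ξ) • unitTangent g ξ) ξ := by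
  have hτ := hasDerivAt_unitTangent h2 hne
  refine (hτ.snd.prodMk hτ.fst.neg).congr_deriv ?_
  ext <;> simp [unitNormal]

theorem hasDerivAt_frenetMap_fst (g : ℝ → ℝ × ℝ) (η ξ : ℝ) :
    HasDerivAt (fun t => frenetMap g (t, ξ)) (unitNormal g ξ) η := by
  simpa [frenetMap] using ((hasDerivAt_id η).smul_const (unitNormal g ξ)).const_add (g ξ)

theorem hasDerivAt_frenetMap_snd (h2 : DifferentiableAt ℝ (deriv g) ξ) (hne : deriv g ξ ≠ 0)
    (η : ℝ) :
    HasDerivAt (fun t => frenetMap g (η, t))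
      ((speed g ξ * (1 + η * signedCurvature g ξ)) • unitTangent g ξ) ξ := by
  refine ((differentiableAt_of_deriv_ne_zero hne).hasDerivAt.add
    ((hasDerivAt_unitNormal h2 hne).const_smul η)).congr_deriv ?_
  rw [← speed_smul_unitTangent (speed_pos hne).ne']
  module

theorem differentiableAt_frenetMap (h2 : DifferentiableAt ℝ (deriv g) ξ) (hne : deriv g ξ ≠ 0)
    (η : ℝ) : DifferentiableAt ℝ (frenetMap g) (η, ξ) := by
  have hg : DifferentiableAt ℝ (fun p : ℝ × ℝ => g p.2) (η, ξ) :=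
    (differentiableAt_of_deriv_ne_zero hne).fun_comp' (η, ξ) differentiableAt_snd
  have hn : DifferentiableAt ℝ (fun p : ℝ × ℝ => unitNormal g p.2) (η, ξ) :=
    (hasDerivAt_unitNormal h2 hne).differentiableAt.fun_comp' (η, ξ) differentiableAt_snd
  exact hg.add (differentiableAt_fst.fun_smul hn)

theorem det_unitNormal_smul_unitTangent (hs : speed g ξ ≠ 0) (c : ℝ) :
    !![(unitNormal g ξ).1, c * (unitTangent g ξ).1;
       (unitNormal g ξ).2, c * (unitTangent g ξ).2].det = c := by
  simp only [Matrix.det_fin_two_of, unitNormal]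
  linear_combination c * unitTangent_fst_sq_add_snd_sq hs

end Curve

/-- For `g` C² on an open interval with `g' ≠ 0`, the Frenet map `P(η,ξ) = g(ξ) + η n(ξ)`
is differentiable at every `(η,ξ)` with `ξ` in the interval, its partial derivatives are
`∂P/∂η = n(ξ)` and `∂P/∂ξ = ‖g'(ξ)‖(1 + ηκ(ξ)) τ(ξ)`, and the determinant of the 2×2
matrix whose columns are these partial derivatives equals `‖g'(ξ)‖(1 + ηκ(ξ))`. -/
theorem frenetMap_partials_det (a b : ℝ) (g : ℝ → ℝ × ℝ)
    (hg : ContDiffOn ℝ 2 g (Ioo a b))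
    (hg' : ∀ ξ ∈ Ioo a b, deriv g ξ ≠ 0) :
    ∀ (η : ℝ), ∀ ξ ∈ Ioo a b,
      DifferentiableAt ℝ (frenetMap g) (η, ξ) ∧
      HasDerivAt (fun t => frenetMap g (t, ξ)) (unitNormal g ξ) η ∧
      HasDerivAt (fun t => frenetMap g (η, t))
        ((speed g ξ * (1 + η * signedCurvature g ξ)) • unitTangent g ξ) ξ ∧
      Matrix.det
        !![(unitNormal g ξ).1, speed g ξ * (1 + η * signedCurvature g ξ) * (unitTangent g ξ).1;
           (unitNormal g ξ).2, speed g ξ * (1 + η * signedCurvature g ξ) * (unitTangent g ξ).2]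
        = speed g ξ * (1 + η * signedCurvature g ξ) := by
  intro η ξ hξ
  have hne := hg' ξ hξ
  have h2 : DifferentiableAt ℝ (deriv g) ξ :=
    ((hg.deriv_of_isOpen isOpen_Ioo (m := 1) (by norm_num)).contDiffAt
      (isOpen_Ioo.mem_nhds hξ)).differentiableAt one_ne_zero
  exact ⟨differentiableAt_frenetMap h2 hne η, hasDerivAt_frenetMap_fst g η ξ,
    hasDerivAt_frenetMap_snd h2 hne η, det_unitNormal_smul_unitTangent (speed_pos hne).ne' _⟩
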